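/- For N ≥ 3, λ > 0, and T > 0, the function u(x,t) = 2(N−2)(T−t)^{N/(N−2)} / (λ + (T−t)^{2/(N−2)} |x|²) defined on ℝ^N × (−∞, T) satisfies the logarithmic diffusion equation u_t = Δ(ln u) pointwise (classically) on ℝ^N × (−∞, T). -/

import Mathlib

open Real

/-- The explicit solution `u(x,t) = 2(N-2)(T-t)^{N/(N-2)} / (λ + (T-t)^{2/(N-2)} |x|²)`. -/
noncomputable def explSol (N : ℕ) (lam T : ℝ) (x : EuclideanSpace ℝ (Fin N)) (t : ℝ) : ℝ :=
  2 * (N - 2) * (T - t) ^ ((N : ℝ) / (N - 2)) /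
    (lam + (T - t) ^ ((2 : ℝ) / (N - 2)) * ‖x‖ ^ 2)

set_option maxHeartbeats 1000000 in
/-- For `N ≥ 3`, `λ > 0`, `T > 0`, the explicit solution satisfies the logarithmic
diffusion equation `u_t = Δ ln u` pointwise (classically) on `ℝ^N × (-∞, T)`, where the
Laplacian is the sum of the second partial derivatives in the coordinate directions. -/
theorem explSol_satisfies_log_diffusion (N : ℕ) (hN : 3 ≤ N) (lam T : ℝ)
    (hlam : 0 < lam) (hT : 0 < T) (x : EuclideanSpace ℝ (Fin N)) (t : ℝ) (ht : t < T) :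
    deriv (fun τ : ℝ => explSol N lam T x τ) t =
      ∑ i : Fin N,
        iteratedDeriv 2
          (fun s : ℝ => Real.log (explSol N lam T (x + s • EuclideanSpace.single i 1) t)) 0 := by
  have hN2 : (0:ℝ) < (N:ℝ) - 2 := by
    have : (3:ℝ) ≤ N := by exact_mod_cast hN
    linarith
  set a : ℝ := T - t with ha_def
  have ha : 0 < a := by simp only [ha_def]; linarith
  set β : ℝ := 2 / ((N:ℝ) - 2) with hβ
  set α : ℝ := (N:ℝ) / ((N:ℝ) - 2) with hα
  have hA : 0 < a ^ β := Real.rpow_pos_of_pos ha β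
  set c : ℝ := ‖x‖ ^ 2 with hc_def
  have hc : 0 ≤ c := by positivity
  have hD : 0 < lam + a ^ β * c := by positivity
  have haα : 0 < a ^ α := Real.rpow_pos_of_pos ha α
  have hαβ : α - 1 = β := by rw [hα, hβ]; field_simp; ring
  -- norm identity
  have hnorm : ∀ (i : Fin N) (s : ℝ),
      ‖x + s • EuclideanSpace.single i 1‖ ^ 2 = c + 2 * (x i) * s + s ^ 2 := by
    intro i s
    rw [@norm_add_sq_real, hc_def]
    simp [real_inner_smul_right, norm_smul, EuclideanSpace.norm_single, EuclideanSpace.inner_single_right]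
    ring
  -- LHS
  have hbase : HasDerivAt (fun τ : ℝ => T - τ) (0 - 1) t :=
    (hasDerivAt_const t T).sub (hasDerivAt_id t)
  have hp : HasDerivAt (fun τ : ℝ => (T - τ) ^ α) ((0 - 1) * α * (T - t) ^ (α - 1)) t :=
    hbase.rpow_const (Or.inl (ne_of_gt ha))
  have hr : HasDerivAt (fun τ : ℝ => (T - τ) ^ β) ((0 - 1) * β * (T - t) ^ (β - 1)) t :=
    hbase.rpow_const (Or.inl (ne_of_gt ha))
  have hnum : HasDerivAt (fun τ : ℝ => 2 * ((N:ℝ) - 2) * (T - τ) ^ α)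
      (2 * ((N:ℝ) - 2) * ((0 - 1) * α * (T - t) ^ (α - 1))) t := hp.const_mul _
  have hden : HasDerivAt (fun τ : ℝ => lam + (T - τ) ^ β * c)
      (0 + (0 - 1) * β * (T - t) ^ (β - 1) * c) t :=
    (hasDerivAt_const t lam).add (hr.mul_const c)
  have hden0 : lam + (T - t) ^ β * c ≠ 0 := by
    rw [← ha_def]; exact ne_of_gt hD
  have hu := (hnum.div hden hden0).deriv
  rw [← ha_def] at hu
  have hLHS : deriv (fun τ : ℝ => explSol N lam T x τ) t =
      (2 * ((N:ℝ) - 2) * ((0 - 1) * α * a ^ (α - 1)) * (lam + a ^ β * c) -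
        2 * ((N:ℝ) - 2) * a ^ α * (0 + (0 - 1) * β * a ^ (β - 1) * c)) /
        (lam + a ^ β * c) ^ 2 := by
    rw [show (fun τ : ℝ => explSol N lam T x τ) =
        (fun τ : ℝ => 2 * ((N:ℝ) - 2) * (T - τ) ^ α / (lam + (T - τ) ^ β * c)) from rfl]
    exact hu
  -- RHS: each second derivative
  have key : ∀ i : Fin N,
      iteratedDeriv 2
        (fun s : ℝ => Real.log (explSol N lam T (x + s • EuclideanSpace.single i 1) t)) 0 =
      (-(2 * a ^ β) * (lam + a ^ β * c) + (2 * a ^ β * (x i)) ^ 2) /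
        (lam + a ^ β * c) ^ 2 := by
    intro i
    have hq0 : ∀ s : ℝ, 0 < lam + a ^ β * (c + 2 * (x i) * s + s ^ 2) := by
      intro s
      have h0 : 0 ≤ c + 2 * (x i) * s + s ^ 2 := by
        rw [← hnorm i s]; positivity
      nlinarith
    have hfun : (fun s : ℝ =>
        Real.log (explSol N lam T (x + s • EuclideanSpace.single i 1) t)) =
        (fun s : ℝ => Real.log (2 * ((N:ℝ) - 2) * a ^ α) -
          Real.log (lam + a ^ β * (c + 2 * (x i) * s + s ^ 2))) := by
      funext s
      show Real.log (2 * ((N:ℝ) - 2) * (T - t) ^ α /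
          (lam + (T - t) ^ β * ‖x + s • EuclideanSpace.single i 1‖ ^ 2)) = _
      rw [← ha_def, hnorm i s, Real.log_div (by positivity) (hq0 s).ne']
    -- derivative of the denominator polynomial
    have hq' : ∀ s : ℝ, HasDerivAt
        (fun s : ℝ => lam + a ^ β * (c + 2 * (x i) * s + s ^ 2))
        (a ^ β * (2 * (x i) + 2 * s)) s := by
      intro s
      have h1 : HasDerivAt (fun s : ℝ => c + 2 * (x i) * s + s ^ 2)
          (0 + 2 * (x i) * 1 + 2 * s ^ 1) s :=
        (((hasDerivAt_const s c).add ((hasDerivAt_id s).const_mul (2 * (x i)))).add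
          (hasDerivAt_pow 2 s))
      have h2 := (hasDerivAt_const s lam).add (h1.const_mul (a ^ β))
      exact h2.congr_deriv (by ring)
    have hg : ∀ s : ℝ, HasDerivAt
        (fun s : ℝ => Real.log (2 * ((N:ℝ) - 2) * a ^ α) -
          Real.log (lam + a ^ β * (c + 2 * (x i) * s + s ^ 2)))
        (-(a ^ β * (2 * (x i) + 2 * s)) / (lam + a ^ β * (c + 2 * (x i) * s + s ^ 2))) s := by
      intro s
      have h2 := (hasDerivAt_const s (Real.log (2 * ((N:ℝ) - 2) * a ^ α))).sub
        ((hq' s).log (hq0 s).ne')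
      exact h2.congr_deriv (by ring)
    have hderivg : deriv (fun s : ℝ => Real.log (2 * ((N:ℝ) - 2) * a ^ α) -
          Real.log (lam + a ^ β * (c + 2 * (x i) * s + s ^ 2))) =
        fun s : ℝ => -(a ^ β * (2 * (x i) + 2 * s)) /
          (lam + a ^ β * (c + 2 * (x i) * s + s ^ 2)) :=
      funext fun s => (hg s).deriv
    have hn : HasDerivAt (fun s : ℝ => -(a ^ β * (2 * (x i) + 2 * s))) (-(a ^ β * 2)) 0 := by
      have h1 : HasDerivAt (fun s : ℝ => 2 * (x i) + 2 * s) (0 + 2 * 1) 0 :=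
        (hasDerivAt_const 0 (2 * (x i))).add ((hasDerivAt_id 0).const_mul 2)
      have h2 := (h1.const_mul (a ^ β)).neg
      exact h2.congr_deriv (by ring)
    have hdd := ((hn.div (hq' 0) (hq0 0).ne')).deriv
    simp only [Pi.div_def] at hdd
    rw [hfun, iteratedDeriv_succ, iteratedDeriv_one, hderivg, hdd]
    rw [div_eq_div_iff (pow_ne_zero 2 (hq0 0).ne') (pow_ne_zero 2 hD.ne')]
    ring
  rw [hLHS, Finset.sum_congr rfl (fun i _ => key i), ← Finset.sum_div]
  have hsum : ∑ i : Fin N, (x i) ^ 2 = c := by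
    rw [hc_def, EuclideanSpace.norm_eq, Real.sq_sqrt (by positivity)]
    simp [Real.norm_eq_abs, sq_abs]
  have hsum2 : ∑ i : Fin N,
      (-(2 * a ^ β) * (lam + a ^ β * c) + (2 * a ^ β * (x i)) ^ 2) =
      (N : ℝ) * (-(2 * a ^ β) * (lam + a ^ β * c)) + 4 * (a ^ β) ^ 2 * c := by
    rw [Finset.sum_add_distrib, Finset.sum_const, Finset.card_univ, Fintype.card_fin,
      nsmul_eq_mul]
    have : ∑ i : Fin N, (2 * a ^ β * (x i)) ^ 2 = 4 * (a ^ β) ^ 2 * ∑ i : Fin N, (x i) ^ 2 := by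
      rw [Finset.mul_sum]
      exact Finset.sum_congr rfl (fun i _ => by ring)
    rw [this, hsum]
  rw [hsum2]
  rw [div_eq_div_iff (by positivity) (by positivity)]
  have e1 : a ^ (α - 1) = a ^ β := by rw [hαβ]
  have e2 : a ^ α * a ^ (β - 1) = a ^ β * a ^ β := by
    rw [← Real.rpow_add ha, ← Real.rpow_add ha]
    congr 1
    rw [hα, hβ]
    field_simp
    ring
  have e3 : ((N:ℝ) - 2) * α = N := by rw [hα]; field_simp
  have e4 : ((N:ℝ) - 2) * β = 2 := by rw [hβ]; field_simp
  rw [e1]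
  linear_combination (lam + a ^ β * c) ^ 2 * (-2 * a ^ β * (lam + a ^ β * c)) * e3 +
    (lam + a ^ β * c) ^ 2 * (2 * c * (a ^ α * a ^ (β - 1))) * e4 +
    (lam + a ^ β * c) ^ 2 * (4 * c) * e2
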